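/- For all integers n ≥ k ≥ 2, b(n,k) = ((k−1)/k) · b(n−1, k−1) + (1/k) · b(n−k, k). -/

import Mathlib

open scoped BigOperators

/-- `bk n k` is the sum, over all integer partitions of `n` whose largest part equals `k`,
of the reciprocal of the product of the parts.  (If no partition of `n` has largest part `k`,
in particular if `k > m ≥ 1` or `m = 0` and `k ≥ 1`, this sum is empty and `bk m k = 0`.) -/
noncomputable def bk (n k : ℕ) : ℝ :=
  ∑ p : Nat.Partition n,
    if p.parts.sup = k then (p.parts.map fun i => (1 : ℝ) / i).prod else 0

/-!
Removing one copy of the largest part `k` from a partition of `n` with largest part `k` is a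
bijection onto the partitions of `n - k` with all parts at most `k`, and it multiplies the weight
by `k`. Hence `b(n,k) = a(n-k,k) / k`, where `a(m,k)` is the weighted count of partitions of `m`
with parts at most `k`. Splitting `a(m,k) = a(m,k-1) + b(m,k)` according to whether the largest
part is `k`, and using `b(n-1,k-1) = a(n-k,k-1) / (k-1)`, gives the recursion.
-/

theorem Multiset.sup_mem_of_ne_zero {α : Type*} [LinearOrder α] [OrderBot α] {s : Multiset α}
    (hs : s ≠ 0) : s.sup ∈ s := by
  induction s using Multiset.induction_on with
  | empty => exact absurd rfl hs
  | cons a s ih =>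
    rcases eq_or_ne s 0 with rfl | h
    · simp
    · rw [Multiset.sup_cons]
      rcases max_choice a s.sup with hmax | hmax <;> rw [hmax]
      · exact Multiset.mem_cons_self a s
      · exact Multiset.mem_cons_of_mem (ih h)

theorem Multiset.sup_eq_iff_mem_and_sup_le {α : Type*} [LinearOrder α] [OrderBot α]
    {s : Multiset α} {a : α} (ha : a ≠ ⊥) : s.sup = a ↔ a ∈ s ∧ s.sup ≤ a := by
  constructor
  · rintro rfl
    refine ⟨Multiset.sup_mem_of_ne_zero ?_, le_rfl⟩
    rintro rfl
    exact ha Multiset.sup_zero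
  · rintro ⟨hmem, hle⟩
    exact hle.antisymm (Multiset.le_sup hmem)

noncomputable def ak (n k : ℕ) : ℝ :=
  ∑ p : Nat.Partition n,
    if p.parts.sup ≤ k then (p.parts.map fun i => (1 : ℝ) / i).prod else 0

theorem ak_succ (n k : ℕ) : ak n (k + 1) = ak n k + bk n (k + 1) := by
  rw [ak, ak, bk, ← Finset.sum_add_distrib]
  refine Finset.sum_congr rfl fun p _ => ?_
  rcases lt_trichotomy p.parts.sup (k + 1) with h | h | h
  · rw [if_pos h.le, if_pos (by omega), if_neg h.ne, add_zero]
  · rw [if_pos h.le, if_neg (by omega), if_pos h, zero_add]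
  · rw [if_neg (by omega), if_neg (by omega), if_neg h.ne', add_zero]

theorem bk_eq_inv_mul_ak {n k : ℕ} (hk : 1 ≤ k) (hkn : k ≤ n) :
    bk n k = (1 / (k : ℝ)) * ak (n - k) k := by
  rw [bk]
  simp_rw [Multiset.sup_eq_iff_mem_and_sup_le (Nat.one_le_iff_ne_zero.mp hk), ite_and]
  rw [← Finset.sum_filter, Finset.sum_subtype _ (p := fun q : n.Partition => k ∈ q.parts) (by simp),
    ← (Nat.Partition.partitionWithPartEquiv hk hkn).symm.sum_comp, ak, Finset.mul_sum]
  refine Finset.sum_congr rfl fun p _ => ?_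
  simp [Multiset.sup_cons, mul_comm]

theorem stmt3 (n k : ℕ) (hk : 2 ≤ k) (hkn : k ≤ n) :
    bk n k = (((k : ℝ) - 1) / k) * bk (n - 1) (k - 1) + (1 / (k : ℝ)) * bk (n - k) k := by
  obtain ⟨j, rfl⟩ : ∃ j, k = j + 1 := ⟨k - 1, by omega⟩
  have hj : (j : ℝ) ≠ 0 := by norm_cast; omega
  have hn : n - 1 - j = n - (j + 1) := by omega
  rw [bk_eq_inv_mul_ak (by omega) hkn, ak_succ, Nat.add_sub_cancel,
    bk_eq_inv_mul_ak (n := n - 1) (k := j) (by omega) (by omega), hn]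
  push_cast
  field_simp
  ring
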